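/- Let a, τ, V be positive real numbers and let ℓ, N be natural numbers with ℓ ≤ N. Define ψ₀(z) = ℓ − N·|z|²/(1+|z|²) and Φ(z) = |z|^(2ℓ)/(1+|z|²)^N for z ∈ ℂ. Then the complex number (2·i·a/τ²) · ∫_ℂ [ψ₀(z)·((2N − V·τ²/(2π)) + (V/(2π))·Φ(z)) − (V/(2π))·((|z|²−1)/(|z|²+1))·Φ(z)] · (2/(1+|z|²)²) dA(z) equals i·a·(V − 4πN/τ²)·(N − 2ℓ). (This is the explicit evaluation of the Einstein–Maxwell–Higgs Futaki invariant: F_{ℓ,N,V,τ} = i·a·(V − 4πN/τ²)·(N − 2ℓ).) -/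

import Mathlib

/-!
In polar coordinates the integral becomes `2π ∫₀^∞ x f(x) dx`, and the radial integrand has an
explicit primitive. Writing `ψ₀ = ℓ - N x²/(1+x²)`, `Φ = x^{2ℓ}/(1+x²)^N` and
`ω = 2/(1+x²)²`, one has `x ψ₀ ω = d/dx ((N-ℓ)/(1+x²) - N/(2(1+x²)²))`, while the whole Higgs
contribution `x (ψ₀ Φ - (x²-1)/(x²+1) Φ) ω` is the derivative of `x^{2ℓ+2}/(1+x²)^{N+2}`, which
vanishes at `0` and, because `ℓ ≤ N`, at infinity. Hence only the constant coefficient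
`2N - Vτ²/(2π)` of `ψ₀` survives, multiplied by `∫₀^∞ x ψ₀ ω dx = ℓ - N/2`.
-/

open MeasureTheory Set Real Filter Topology

theorem integral_comp_norm_complex {F : Type*} [NormedAddCommGroup F] [NormedSpace ℝ F]
    (f : ℝ → F) : ∫ z : ℂ, f ‖z‖ = (2 * π) • ∫ x in Ioi (0 : ℝ), x • f x := by
  rw [integral_fun_norm_addHaar volume f]
  simp [Measure.real, ← smul_assoc, mul_comm]

theorem hasDerivAt_one_add_sq (x : ℝ) : HasDerivAt (fun x : ℝ => 1 + x ^ 2) (2 * x) x := by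
  simpa using (hasDerivAt_pow 2 x).const_add 1

theorem tendsto_inv_one_add_sq_atTop : Tendsto (fun x : ℝ => (1 + x ^ 2)⁻¹) atTop (𝓝 0) :=
  (tendsto_atTop_add_const_left _ 1 (tendsto_pow_atTop two_ne_zero)).inv_tendsto_atTop

theorem abs_sub_mul_div_one_add_sq_le (l n x : ℝ) :
    |l - n * x ^ 2 / (1 + x ^ 2)| ≤ |l| + |n| := by
  have h0 : 0 ≤ x ^ 2 / (1 + x ^ 2) := by positivity
  have h1 : x ^ 2 / (1 + x ^ 2) ≤ 1 := by rw [div_le_one (by positivity)]; linarith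
  calc |l - n * x ^ 2 / (1 + x ^ 2)| ≤ |l| + |n| * |x ^ 2 / (1 + x ^ 2)| := by
        rw [mul_div_assoc, ← abs_mul]; exact abs_sub _ _
    _ ≤ |l| + |n| := by
        rw [abs_of_nonneg h0]; gcongr; exact mul_le_of_le_one_right (abs_nonneg n) h1

theorem abs_sq_sub_one_div_sq_add_one_le (x : ℝ) : |(x ^ 2 - 1) / (x ^ 2 + 1)| ≤ 1 := by
  rw [abs_div, abs_of_pos (by positivity : (0 : ℝ) < x ^ 2 + 1), div_le_one (by positivity),
    abs_le]
  constructor <;> nlinarith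

theorem abs_pow_two_mul_div_one_add_sq_pow_le_one {k n : ℕ} (hkn : k ≤ n) (x : ℝ) :
    |x ^ (2 * k) / (1 + x ^ 2) ^ n| ≤ 1 := by
  rw [pow_mul, abs_of_nonneg (by positivity), div_le_one (by positivity)]
  calc (x ^ 2) ^ k ≤ (1 + x ^ 2) ^ k := by gcongr; linarith
    _ ≤ (1 + x ^ 2) ^ n := pow_le_pow_right₀ (by nlinarith) hkn

theorem integrableOn_Ioi_mul_div_one_add_sq_sq :
    IntegrableOn (fun x : ℝ => x * (2 / (1 + x ^ 2) ^ 2)) (Ioi 0) := by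
  refine integrableOn_Ioi_deriv_of_nonneg' (g := fun x => -(1 + x ^ 2)⁻¹) (l := 0)
    (fun x _ => ((hasDerivAt_one_add_sq x).fun_inv (by positivity)).neg.congr_deriv (by ring))
    (fun x (hx : 0 < x) => by positivity) (by simpa using tendsto_inv_one_add_sq_atTop.neg)

theorem integrableOn_Ioi_mul_mul_div_one_add_sq_sq {B : ℝ → ℝ} {C : ℝ} (hB : Continuous B)
    (hBC : ∀ x, |B x| ≤ C) :
    IntegrableOn (fun x : ℝ => x * (B x * (2 / (1 + x ^ 2) ^ 2))) (Ioi 0) := by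
  refine (integrableOn_Ioi_mul_div_one_add_sq_sq.const_mul C).mono'
    (by fun_prop (disch := intro x; positivity)) ?_
  filter_upwards [ae_restrict_mem measurableSet_Ioi] with x hx
  have hx : (0 : ℝ) < x := hx
  have hw : (0 : ℝ) < 2 / (1 + x ^ 2) ^ 2 := by positivity
  rw [Real.norm_eq_abs, abs_mul, abs_mul, abs_of_pos hx, abs_of_pos hw, mul_left_comm]
  exact mul_le_mul_of_nonneg_right (hBC x) (by positivity)

theorem hasDerivAt_momentMap_primitive (l n x : ℝ) :
    HasDerivAt (fun x : ℝ => (n - l) * (1 + x ^ 2)⁻¹ - n / 2 * ((1 + x ^ 2) ^ 2)⁻¹)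
      (x * ((l - n * x ^ 2 / (1 + x ^ 2)) * (2 / (1 + x ^ 2) ^ 2))) x := by
  have h1 : HasDerivAt (fun x : ℝ => (1 + x ^ 2)⁻¹) (-(2 * x) / (1 + x ^ 2) ^ 2) x :=
    (hasDerivAt_one_add_sq x).fun_inv (by positivity)
  have h2 : HasDerivAt (fun x : ℝ => ((1 + x ^ 2) ^ 2)⁻¹)
      (-(2 * (1 + x ^ 2) * (2 * x)) / ((1 + x ^ 2) ^ 2) ^ 2) x := by
    simpa using ((hasDerivAt_one_add_sq x).fun_pow 2).fun_inv (by positivity)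
  refine ((h1.const_mul (n - l)).sub (h2.const_mul (n / 2))).congr_deriv ?_
  have : 1 + x ^ 2 ≠ 0 := by positivity
  field_simp
  ring

theorem hasDerivAt_higgs_primitive (ℓ N : ℕ) (x : ℝ) :
    HasDerivAt (fun x : ℝ => x ^ (2 * ℓ + 2) / (1 + x ^ 2) ^ (N + 2))
      (x * ((((ℓ : ℝ) - (N : ℝ) * x ^ 2 / (1 + x ^ 2)) * (x ^ (2 * ℓ) / (1 + x ^ 2) ^ N) -
        (x ^ 2 - 1) / (x ^ 2 + 1) * (x ^ (2 * ℓ) / (1 + x ^ 2) ^ N)) *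
          (2 / (1 + x ^ 2) ^ 2))) x := by
  have hnum : HasDerivAt (fun x : ℝ => x ^ (2 * ℓ + 2)) ((2 * ℓ + 2) * x ^ (2 * ℓ + 1)) x := by
    simpa using hasDerivAt_pow (2 * ℓ + 2) x
  have hden : HasDerivAt (fun x : ℝ => (1 + x ^ 2) ^ (N + 2))
      ((N + 2) * (1 + x ^ 2) ^ (N + 1) * (2 * x)) x := by
    simpa using (hasDerivAt_one_add_sq x).fun_pow (N + 2)
  refine (hnum.div hden (by positivity)).congr_deriv ?_
  have : 1 + x ^ 2 ≠ 0 := by positivity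
  have : x ^ 2 + 1 ≠ 0 := by positivity
  field_simp
  ring

theorem tendsto_higgs_primitive_atTop {ℓ N : ℕ} (hℓN : ℓ ≤ N) :
    Tendsto (fun x : ℝ => x ^ (2 * ℓ + 2) / (1 + x ^ 2) ^ (N + 2)) atTop (𝓝 0) := by
  have hsplit : ∀ x : ℝ, x ^ (2 * ℓ + 2) / (1 + x ^ 2) ^ (N + 2)
      = (x ^ 2) ^ (ℓ + 1) / (1 + x ^ 2) ^ (N + 1) * (1 + x ^ 2)⁻¹ := fun x => by
    rw [← pow_mul, pow_succ _ (N + 1), div_mul_eq_div_div, div_eq_mul_inv, mul_add_one]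
  simp_rw [hsplit]
  refine squeeze_zero (fun x => by positivity) (fun x => ?_) tendsto_inv_one_add_sq_atTop
  have hΦ := abs_pow_two_mul_div_one_add_sq_pow_le_one (Nat.succ_le_succ hℓN) x
  rw [pow_mul, abs_of_nonneg (by positivity)] at hΦ
  exact mul_le_of_le_one_left (by positivity) hΦ

theorem integral_Ioi_futaki_radial (A c : ℝ) {ℓ N : ℕ} (hℓN : ℓ ≤ N) :
    ∫ x in Ioi (0 : ℝ), x *
      ((((ℓ : ℝ) - (N : ℝ) * x ^ 2 / (1 + x ^ 2)) * (A + c * (x ^ (2 * ℓ) / (1 + x ^ 2) ^ N)) -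
        c * ((x ^ 2 - 1) / (x ^ 2 + 1)) * (x ^ (2 * ℓ) / (1 + x ^ 2) ^ N)) *
          (2 / (1 + x ^ 2) ^ 2))
    = A * ((ℓ : ℝ) - (N : ℝ) / 2) := by
  set ψ : ℝ → ℝ := fun x => (ℓ : ℝ) - (N : ℝ) * x ^ 2 / (1 + x ^ 2)
  set Φ : ℝ → ℝ := fun x => x ^ (2 * ℓ) / (1 + x ^ 2) ^ N
  set r : ℝ → ℝ := fun x => (x ^ 2 - 1) / (x ^ 2 + 1)
  set B : ℝ → ℝ := fun x => ψ x * (A + c * Φ x) - c * r x * Φ x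
  set F : ℝ → ℝ := fun x => A * ((N - ℓ) * (1 + x ^ 2)⁻¹ - N / 2 * ((1 + x ^ 2) ^ 2)⁻¹) +
    c * (x ^ (2 * ℓ + 2) / (1 + x ^ 2) ^ (N + 2))
  show ∫ x in Ioi (0 : ℝ), x * (B x * (2 / (1 + x ^ 2) ^ 2)) = _
  have hF : ∀ x ∈ Ici (0 : ℝ), HasDerivAt F (x * (B x * (2 / (1 + x ^ 2) ^ 2))) x := fun x _ =>
    (((hasDerivAt_momentMap_primitive ℓ N x).const_mul A).add
      ((hasDerivAt_higgs_primitive ℓ N x).const_mul c)).congr_deriv (by ring)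
  have hF_top : Tendsto F atTop (𝓝 0) := by
    simpa using ((((tendsto_inv_one_add_sq_atTop.const_mul _).sub
      ((tendsto_inv_one_add_sq_atTop.pow 2).const_mul _)).const_mul A).add
        ((tendsto_higgs_primitive_atTop hℓN).const_mul c))
  have hB : ∀ x, |B x| ≤ (|(ℓ : ℝ)| + |(N : ℝ)|) * (|A| + |c|) + |c| := fun x => by
    have hψ : |ψ x| ≤ |(ℓ : ℝ)| + |(N : ℝ)| := abs_sub_mul_div_one_add_sq_le ℓ N x
    have hr : |r x| ≤ 1 := abs_sq_sub_one_div_sq_add_one_le x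
    have hΦ : |Φ x| ≤ 1 := abs_pow_two_mul_div_one_add_sq_pow_le_one hℓN x
    have hAΦ : |A + c * Φ x| ≤ |A| + |c| := (abs_add_le _ _).trans <| by
      rw [abs_mul]; gcongr; exact mul_le_of_le_one_right (abs_nonneg c) hΦ
    calc |B x| ≤ |ψ x| * |A + c * Φ x| + |c| * |r x| * |Φ x| := by
          simpa only [abs_mul] using abs_sub (ψ x * (A + c * Φ x)) (c * r x * Φ x)
      _ ≤ (|(ℓ : ℝ)| + |(N : ℝ)|) * (|A| + |c|) + |c| * 1 * 1 := by gcongr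
      _ = _ := by ring
  have hint := integrableOn_Ioi_mul_mul_div_one_add_sq_sq
    (by fun_prop (disch := intro x; positivity)) hB
  rw [integral_Ioi_of_hasDerivAt_of_tendsto' hF hint hF_top]
  norm_num [F]
  ring

open Real in
theorem futaki_invariant_evaluation (a τ V : ℝ) (hτ : 0 < τ)
    (ℓ N : ℕ) (hℓN : ℓ ≤ N) :
    (2 * Complex.I * (a : ℂ) / (τ : ℂ) ^ 2) *
      ∫ z : ℂ,
        ((((ℓ : ℝ) - (N : ℝ) * ‖z‖ ^ 2 / (1 + ‖z‖ ^ 2)) *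
            ((2 * (N : ℝ) - V * τ ^ 2 / (2 * π)) +
              (V / (2 * π)) * (‖z‖ ^ (2 * ℓ) / (1 + ‖z‖ ^ 2) ^ N)) -
          (V / (2 * π)) * ((‖z‖ ^ 2 - 1) / (‖z‖ ^ 2 + 1)) *
            (‖z‖ ^ (2 * ℓ) / (1 + ‖z‖ ^ 2) ^ N)) *
          (2 / (1 + ‖z‖ ^ 2) ^ 2) : ℝ)
    = Complex.I * (a : ℂ) * ((V - 4 * π * (N : ℝ) / τ ^ 2 : ℝ) : ℂ) * (((N : ℝ) - 2 * (ℓ : ℝ) : ℝ) : ℂ) := by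
  rw [integral_comp_norm_complex (fun x : ℝ =>
      (((ℓ : ℝ) - (N : ℝ) * x ^ 2 / (1 + x ^ 2)) *
          ((2 * (N : ℝ) - V * τ ^ 2 / (2 * π)) + (V / (2 * π)) * (x ^ (2 * ℓ) / (1 + x ^ 2) ^ N)) -
        (V / (2 * π)) * ((x ^ 2 - 1) / (x ^ 2 + 1)) * (x ^ (2 * ℓ) / (1 + x ^ 2) ^ N)) *
          (2 / (1 + x ^ 2) ^ 2))]
  simp only [smul_eq_mul]
  rw [integral_Ioi_futaki_radial _ _ hℓN]
  have hτ' : (τ : ℂ) ≠ 0 := by exact_mod_cast hτ.ne'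
  have hπ : (π : ℂ) ≠ 0 := by exact_mod_cast pi_ne_zero
  push_cast
  field_simp
  ring
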